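/- Let d ≥ 1 be an integer, Ω ⊆ ℝ^d open, and u : Ω → ℝ continuously differentiable. Suppose there are constants K > 0 and β > 0 such that for all y ∈ Ω and r > 0 with B(r,y) ⊆ Ω one has ∫_{B(r,y)} |∇u|^d dx ≤ K r^{βd}. Then for all y ∈ Ω and r > 0 with B(3r/2, y) ⊆ Ω, sup_{B(r/2,y)} u - inf_{B(r/2,y)} u ≤ (4/β) · (K/ω_d)^{1/d} · r^β. -/

import Mathlib

open MeasureTheory Filter Metric Pointwise

noncomputable section

/-- Euclidean space ℝ^d. -/
abbrev Rd (d : ℕ) := EuclideanSpace ℝ (Fin d)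

/-- `u` is smooth and compactly supported. -/
def SmoothCS (d : ℕ) (u : Rd d → ℝ) : Prop :=
  ContDiff ℝ (⊤ : ℕ∞) u ∧ HasCompactSupport u

/-- The functional Q_V[u] = ∫ (|∇u|^p − V |u|^p). -/
def Qf (d : ℕ) (p : ℝ) (V u : Rd d → ℝ) : ℝ :=
  ∫ x, (‖fderiv ℝ u x‖ ^ p - V x * |u x| ^ p)

/-- λ_p(V): the infimum of the Rayleigh quotients Q_V[u] / ‖u‖_p^p over nonzero
smooth compactly supported u. -/
def lam (d : ℕ) (p : ℝ) (V : Rd d → ℝ) : ℝ :=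
  sInf {r : ℝ | ∃ u : Rd d → ℝ, SmoothCS d u ∧ u ≠ 0 ∧
    r = Qf d p V u / ∫ x, |u x| ^ p}

/-- The sharp constant S_{d,p} in ‖u‖_∞^p ≤ S ‖∇u‖_p^d ‖u‖_p^{p-d}. -/
def SobolevSharp (d : ℕ) (p : ℝ) : ℝ :=
  sInf {S : ℝ | ∀ u : Rd d → ℝ, SmoothCS d u →
    (⨆ x, |u x|) ^ p ≤ S * (∫ x, ‖fderiv ℝ u x‖ ^ p) ^ ((d : ℝ) / p) *
      (∫ x, |u x| ^ p) ^ ((p - d) / p)}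

/-- E(v) = inf { ‖∇u‖_p^p − v |u(0)|^p : ‖u‖_p = 1 }. -/
def Efun (d : ℕ) (p v : ℝ) : ℝ :=
  sInf {r : ℝ | ∃ u : Rd d → ℝ, SmoothCS d u ∧ (∫ x, |u x| ^ p) = 1 ∧
    r = (∫ x, ‖fderiv ℝ u x‖ ^ p) - v * |u (0 : Rd d)| ^ p}

/-- ω_d, the surface area of the unit sphere in ℝ^d. -/
def omegaD (d : ℕ) : ℝ := d * (volume (ball (0 : Rd d) 1)).toReal


section Helpers

variable {d : ℕ} {Ω : Set (Rd d)} {u : Rd d → ℝ} {K β : ℝ}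

theorem ftc_seg (hΩ : IsOpen Ω) (hu : ContDiffOn ℝ 1 u Ω) (a b : Rd d)
    (hseg : ∀ t : ℝ, t ∈ Set.Icc (0:ℝ) 1 → a + t • (b - a) ∈ Ω) :
    u b - u a = ∫ t in (0:ℝ)..1, (fderiv ℝ u (a + t • (b - a))) (b - a) := by
  have hdiff : ∀ x ∈ Ω, HasFDerivAt u (fderiv ℝ u x) x := fun x hx =>
    ((hu.differentiableOn one_ne_zero x hx).differentiableAt (hΩ.mem_nhds hx)).hasFDerivAt
  have hcf : ContinuousOn (fderiv ℝ u) Ω := hu.continuousOn_fderiv_of_isOpen hΩ le_rfl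
  have hγ : ∀ t : ℝ, HasDerivAt (fun s : ℝ => a + s • (b - a)) (b - a) t := fun t => by
    simpa using ((hasDerivAt_id t).smul_const (b - a)).const_add a
  have hg : ∀ t ∈ Set.uIcc (0:ℝ) 1,
      HasDerivAt (fun s : ℝ => u (a + s • (b - a)))
        ((fderiv ℝ u (a + t • (b - a))) (b - a)) t := by
    intro t ht
    rw [Set.uIcc_of_le (by norm_num : (0:ℝ) ≤ 1)] at ht
    exact (hdiff _ (hseg t ht)).comp_hasDerivAt t (hγ t)
  have hcont : ContinuousOn (fun t : ℝ => (fderiv ℝ u (a + t • (b - a))) (b - a))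
      (Set.uIcc (0:ℝ) 1) := by
    rw [Set.uIcc_of_le (by norm_num : (0:ℝ) ≤ 1)]
    have h1 : ContinuousOn (fun t : ℝ => a + t • (b - a)) (Set.Icc (0:ℝ) 1) :=
      (continuous_const.add (continuous_id.smul continuous_const)).continuousOn
    have := hcf.comp h1 (fun t ht => hseg t ht)
    exact (this.clm_apply continuousOn_const)
  have := intervalIntegral.integral_eq_sub_of_hasDerivAt hg
    (hcont.intervalIntegrable)
  rw [this]; simp

theorem seg_bound (hΩ : IsOpen Ω) (hu : ContDiffOn ℝ 1 u Ω) (a b : Rd d)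
    (hseg : ∀ t : ℝ, t ∈ Set.Icc (0:ℝ) 1 → a + t • (b - a) ∈ Ω) :
    |u b - u a| ≤ ‖b - a‖ * ∫ t in (0:ℝ)..1, ‖fderiv ℝ u (a + t • (b - a))‖ := by
  rw [ftc_seg hΩ hu a b hseg]
  have h1 : ContinuousOn (fun t : ℝ => a + t • (b - a)) (Set.Icc (0:ℝ) 1) :=
    (continuous_const.add (continuous_id.smul continuous_const)).continuousOn
  have hcf : ContinuousOn (fderiv ℝ u) Ω := hu.continuousOn_fderiv_of_isOpen hΩ le_rfl
  have hcont : ContinuousOn (fun t : ℝ => fderiv ℝ u (a + t • (b - a))) (Set.Icc (0:ℝ) 1) :=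
    hcf.comp h1 (fun t ht => hseg t ht)
  calc |∫ t in (0:ℝ)..1, (fderiv ℝ u (a + t • (b - a))) (b - a)|
      ≤ ∫ t in (0:ℝ)..1, |(fderiv ℝ u (a + t • (b - a))) (b - a)| :=
        intervalIntegral.abs_integral_le_integral_abs (by norm_num)
    _ ≤ ∫ t in (0:ℝ)..1, ‖fderiv ℝ u (a + t • (b - a))‖ * ‖b - a‖ := by
        refine intervalIntegral.integral_mono_on (by norm_num) ?_ ?_ ?_
        · exact ContinuousOn.intervalIntegrable (by
            rw [Set.uIcc_of_le (by norm_num : (0:ℝ) ≤ 1)]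
            exact (hcont.clm_apply continuousOn_const).abs)
        · exact ContinuousOn.intervalIntegrable (by
            rw [Set.uIcc_of_le (by norm_num : (0:ℝ) ≤ 1)]
            exact hcont.norm.mul continuousOn_const)
        · intro t ht
          exact (fderiv ℝ u (a + t • (b - a))).le_opNorm (b - a)
    _ = ‖b - a‖ * ∫ t in (0:ℝ)..1, ‖fderiv ℝ u (a + t • (b - a))‖ := by
        rw [intervalIntegral.integral_mul_const, mul_comm]

theorem vol_ball_toReal (hd : 1 ≤ d) (x : Rd d) (ρ : ℝ) (hρ : 0 ≤ ρ) :
    (volume (ball x ρ)).toReal = ρ ^ d * (volume (ball (0 : Rd d) 1)).toReal := by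
  haveI : Nontrivial (Rd d) :=
    Module.nontrivial_of_finrank_pos (R := ℝ) (by rw [finrank_euclideanSpace_fin]; omega)
  rw [Measure.addHaar_ball volume x hρ, finrank_euclideanSpace_fin, ENNReal.toReal_mul,
    ENNReal.toReal_ofReal (by positivity)]

theorem holder_ball (hd : 1 ≤ d) (hΩ : IsOpen Ω) (hu : ContDiffOn ℝ 1 u Ω)
    (hK : 0 < K) (hβ : 0 < β)
    (hint : ∀ (y : Rd d) (r : ℝ), 0 < r → ball y r ⊆ Ω →
      (∫ x in ball y r, ‖fderiv ℝ u x‖ ^ (d : ℝ)) ≤ K * r ^ (β * d))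
    (c : Rd d) (ρ : ℝ) (hρ : 0 < ρ) (hcl : closedBall c ρ ⊆ Ω) :
    ∫ x in ball c ρ, ‖fderiv ℝ u x‖ ≤
      (K / (volume (ball (0 : Rd d) 1)).toReal) ^ (1 / (d:ℝ)) *
        (volume (ball (0 : Rd d) 1)).toReal * ρ ^ (β + d - 1) := by
  set B1 := (volume (ball (0 : Rd d) 1)).toReal with hB1
  have hB1pos : 0 < B1 :=
    ENNReal.toReal_pos (measure_ball_pos volume _ one_pos).ne' measure_ball_lt_top.ne
  have hsub : ball c ρ ⊆ Ω := (ball_subset_closedBall).trans hcl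
  have hD0 : (0:ℝ) < d := by exact_mod_cast hd
  have hIb := hint c ρ hρ hsub
  rcases eq_or_lt_of_le hd with h1 | h2
  · -- d = 1
    have hd1 : d = 1 := h1.symm
    subst hd1
    have hgoal : (K / B1) ^ (1 / ((1:ℕ):ℝ)) * B1 * ρ ^ (β + (1:ℕ) - 1) = K * ρ ^ β := by
      rw [show (1:ℝ) / ((1:ℕ):ℝ) = 1 by norm_num, Real.rpow_one,
        div_mul_cancel₀ _ hB1pos.ne', show β + ((1:ℕ):ℝ) - 1 = β by push_cast; ring]
    rw [hgoal]
    calc ∫ x in ball c ρ, ‖fderiv ℝ u x‖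
        = ∫ x in ball c ρ, ‖fderiv ℝ u x‖ ^ ((1:ℕ):ℝ) := by simp
      _ ≤ K * ρ ^ β := by simpa using hIb
  · -- d ≥ 2
    have hD1 : (1:ℝ) < d := by exact_mod_cast h2
    have hpq : Real.HolderConjugate d (Real.conjExponent d) :=
      Real.HolderConjugate.conjExponent hD1
    set μ := volume.restrict (ball c ρ) with hμ
    haveI : IsFiniteMeasure μ := by
      constructor
      rw [hμ, Measure.restrict_apply_univ]
      exact measure_ball_lt_top
    -- boundedness of ‖Du‖ on the ball
    obtain ⟨M, hM⟩ := (isCompact_closedBall c ρ).exists_bound_of_continuousOn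
      ((hu.continuousOn_fderiv_of_isOpen hΩ le_rfl).mono hcl).norm
    have hmeas : Measurable (fun x => ‖fderiv ℝ u x‖) := (measurable_fderiv ℝ u).norm
    have hfmem : ∀ p : ℝ, MemLp (fun x => ‖fderiv ℝ u x‖) (ENNReal.ofReal p) μ := by
      intro p
      refine MemLp.mono_exponent (q := ⊤) ?_ le_top
      refine memLp_top_of_bound hmeas.aestronglyMeasurable M ?_
      rw [hμ, ae_restrict_iff' measurableSet_ball]
      filter_upwards with x hx
      simpa using hM x (ball_subset_closedBall hx)
    have hHo := integral_mul_le_Lp_mul_Lq_of_nonneg (μ := μ) hpq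
      (f := fun x => ‖fderiv ℝ u x‖) (g := fun _ => (1:ℝ))
      (Eventually.of_forall fun x => norm_nonneg _)
      (Eventually.of_forall fun x => zero_le_one)
      (hfmem d) (memLp_const 1)
    simp only [mul_one, Real.one_rpow] at hHo
    have hg1 : (∫ _ in ball c ρ, (1:ℝ)) = ρ ^ d * B1 := by
      rw [setIntegral_const, measureReal_def, smul_eq_mul, mul_one, vol_ball_toReal hd c ρ hρ.le]
    rw [hμ] at hHo
    rw [hg1] at hHo
    have hmono : (∫ x in ball c ρ, ‖fderiv ℝ u x‖ ^ (d:ℝ)) ^ (1/(d:ℝ)) ≤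
        (K * ρ ^ (β * d)) ^ (1/(d:ℝ)) := by
      apply Real.rpow_le_rpow _ hIb (by positivity)
      apply integral_nonneg
      intro x; positivity
    have hcj : 1 / Real.conjExponent d = ((d:ℝ) - 1)/d := by
      rw [Real.conjExponent]
      field_simp
    have key : ∫ x in ball c ρ, ‖fderiv ℝ u x‖ ≤
        (K * ρ ^ (β * d)) ^ (1/(d:ℝ)) * (ρ ^ d * B1) ^ (((d:ℝ)-1)/d) := by
      refine hHo.trans ?_
      rw [hcj]
      exact mul_le_mul_of_nonneg_right hmono (by positivity)
    refine key.trans_eq ?_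
    rw [Real.mul_rpow hK.le (by positivity), Real.mul_rpow (by positivity) hB1pos.le,
      ← Real.rpow_natCast ρ d, ← Real.rpow_mul hρ.le, ← Real.rpow_mul hρ.le,
      Real.div_rpow hK.le hB1pos.le]
    have e1 : β * d * (1/(d:ℝ)) = β := by field_simp
    have e2 : (d:ℝ) * (((d:ℝ)-1)/d) = (d:ℝ) - 1 := by field_simp
    have e3 : B1 ^ (((d:ℝ)-1)/d) * B1 ^ (1/(d:ℝ)) = B1 := by
      rw [← Real.rpow_add hB1pos, show ((d:ℝ)-1)/d + 1/(d:ℝ) = 1 by field_simp; ring,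
        Real.rpow_one]
    rw [e1, e2, show β + (d:ℝ) - 1 = β + ((d:ℝ)-1) by ring, Real.rpow_add hρ]
    field_simp
    linear_combination e3

variable {d : ℕ} {Ω : Set (Rd d)} {u : Rd d → ℝ} {K β : ℝ}

theorem transl (x c : Rd d) (ρ : ℝ) (g : Rd d → ℝ) :
    ∫ w in ball (c - x) ρ, g (x + w) = ∫ w in ball c ρ, g w := by
  have h := (measurePreserving_add_left (volume : Measure (Rd d)) x).setIntegral_preimage_emb
    (MeasurableEquiv.addLeft x).measurableEmbedding g (ball c ρ)
  rw [← h]; congr 1; ext w; simp [dist_eq_norm]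

theorem transl0 (x : Rd d) (ρ : ℝ) (g : Rd d → ℝ) :
    ∫ w in ball (0:Rd d) ρ, g (x + w) = ∫ w in ball x ρ, g w := by
  have := transl x x ρ g; rwa [sub_self] at this

-- product integrability of (w,t) ↦ ‖Du (c t + w)‖ with c t = z + t • (x - z)
theorem prod_integrable (hΩ : IsOpen Ω) (hu : ContDiffOn ℝ 1 u Ω)
    (z v : Rd d) (ρ : ℝ) (hρ : 0 < ρ)
    (hin : ∀ t ∈ Set.Icc (0:ℝ) 1, ∀ w ∈ closedBall (0: Rd d) ρ, z + t • v + w ∈ Ω) :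
    Integrable (Function.uncurry fun (w : Rd d) (t : ℝ) => ‖fderiv ℝ u (z + t • v + w)‖)
      ((volume.restrict (ball (0:Rd d) ρ)).prod (volume.restrict (Set.Ioc (0:ℝ) 1))) := by
  rw [Measure.prod_restrict]
  refine IntegrableOn.mono_set ?_
    (Set.prod_mono ball_subset_closedBall Set.Ioc_subset_Icc_self)
  refine ContinuousOn.integrableOn_compact
    ((isCompact_closedBall _ _).prod isCompact_Icc) ?_
  have hφ : ContinuousOn (fun p : Rd d × ℝ => z + p.2 • v + p.1)
      (closedBall (0:Rd d) ρ ×ˢ Set.Icc (0:ℝ) 1) :=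
    Continuous.continuousOn (by fun_prop)
  refine ((hu.continuousOn_fderiv_of_isOpen hΩ le_rfl).norm.comp hφ ?_)
  rintro ⟨w, t⟩ ⟨hw, ht⟩
  exact hin t ht w hw

theorem avg_diff (hd : 1 ≤ d) (hΩ : IsOpen Ω) (hu : ContDiffOn ℝ 1 u Ω)
    (hK : 0 < K) (hβ : 0 < β)
    (hint : ∀ (y : Rd d) (r : ℝ), 0 < r → ball y r ⊆ Ω →
      (∫ x in ball y r, ‖fderiv ℝ u x‖ ^ (d : ℝ)) ≤ K * r ^ (β * d))
    (y : Rd d) (r ρ : ℝ) (hr : 0 < r) (hρ : 0 < ρ) (hρr : ρ ≤ r)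
    (hball : ball y (3*r/2) ⊆ Ω)
    (x z : Rd d) (hx : x ∈ ball y (r/2)) (hz : z ∈ ball y (r/2)) :
    |(ρ^d * (volume (ball (0 : Rd d) 1)).toReal)⁻¹ * (∫ w in ball x ρ, u w) -
      (ρ^d * (volume (ball (0 : Rd d) 1)).toReal)⁻¹ * (∫ w in ball z ρ, u w)|
      ≤ (K / (volume (ball (0 : Rd d) 1)).toReal) ^ (1/(d:ℝ)) * ‖x - z‖ * ρ ^ (β - 1) := by
  set B1 := (volume (ball (0 : Rd d) 1)).toReal with hB1
  have hB1pos : 0 < B1 :=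
    ENNReal.toReal_pos (measure_ball_pos volume _ one_pos).ne' measure_ball_lt_top.ne
  have hVpos : 0 < ρ^d * B1 := by positivity
  set C := (K / B1) ^ (1/(d:ℝ)) with hC
  have hCpos : 0 < C := by
    rw [hC]; positivity
  -- the moving center
  set c : ℝ → Rd d := fun t => z + t • (x - z) with hc
  have hcmem : ∀ t ∈ Set.Icc (0:ℝ) 1, c t ∈ ball y (r/2) := fun t ht =>
    (convex_ball y (r/2)).add_smul_sub_mem hz hx ht
  have hclsub : ∀ t ∈ Set.Icc (0:ℝ) 1, closedBall (c t) ρ ⊆ Ω := by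
    intro t ht p hp
    apply hball
    rw [mem_ball]
    calc dist p y ≤ dist p (c t) + dist (c t) y := dist_triangle _ _ _
      _ < ρ + r/2 := by
          have := hcmem t ht; rw [mem_ball] at this
          exact add_lt_add_of_le_of_lt (mem_closedBall.1 hp) this
      _ ≤ 3*r/2 := by linarith
  have hin : ∀ t ∈ Set.Icc (0:ℝ) 1, ∀ w ∈ closedBall (0:Rd d) ρ, z + t • (x-z) + w ∈ Ω := by
    intro t ht w hw
    apply hclsub t ht
    rw [mem_closedBall, dist_eq_norm]
    simpa [hc, norm_sub_rev] using mem_closedBall_zero_iff.1 hw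
  have hPI := prod_integrable hΩ hu z (x - z) ρ hρ hin
  -- translations
  have htx : (∫ w in ball x ρ, u w) = ∫ w in ball (0:Rd d) ρ, u (x + w) := (transl0 x ρ u).symm
  have htz : (∫ w in ball z ρ, u w) = ∫ w in ball (0:Rd d) ρ, u (z + w) := (transl0 z ρ u).symm
  -- integrability of u translates on the ball
  have hui : ∀ a : Rd d, a ∈ ball y (r/2) → IntegrableOn (fun w => u (a + w)) (ball (0:Rd d) ρ) := by
    intro a ha
    refine IntegrableOn.mono_set ?_ (ball_subset_closedBall)
    refine ContinuousOn.integrableOn_compact (isCompact_closedBall _ _) ?_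
    refine (hu.continuousOn.comp (Continuous.continuousOn (by fun_prop)) ?_)
    intro w hw
    apply hball
    rw [mem_ball]
    calc dist (a + w) y ≤ dist (a + w) a + dist a y := dist_triangle _ _ _
      _ < ρ + r/2 := add_lt_add_of_le_of_lt (by
          rw [dist_eq_norm]; simpa using mem_closedBall_zero_iff.1 hw) (mem_ball.1 ha)
      _ ≤ 3*r/2 := by linarith
  -- step: pointwise bound
  have hpw : ∀ w ∈ ball (0:Rd d) ρ, |u (x + w) - u (z + w)| ≤
      ‖x - z‖ * ∫ t in Set.Ioc (0:ℝ) 1, ‖fderiv ℝ u (z + t • (x - z) + w)‖ := by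
    intro w hw
    have hw' : w ∈ closedBall (0:Rd d) ρ := ball_subset_closedBall hw
    have hseg : ∀ t : ℝ, t ∈ Set.Icc (0:ℝ) 1 → (z + w) + t • ((x + w) - (z + w)) ∈ Ω := by
      intro t ht
      have : (z + w) + t • ((x + w) - (z + w)) = z + t • (x - z) + w := by
        rw [show (x + w) - (z + w) = x - z by abel]; abel
      rw [this]; exact hin t ht w hw'
    have hsb := seg_bound hΩ hu (z + w) (x + w) hseg
    rw [show (x + w) - (z + w) = x - z by abel] at hsb
    have hre : (∫ t in (0:ℝ)..1, ‖fderiv ℝ u ((z + w) + t • (x - z))‖)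
        = ∫ t in Set.Ioc (0:ℝ) 1, ‖fderiv ℝ u (z + t • (x - z) + w)‖ := by
      rw [intervalIntegral.integral_of_le zero_le_one]
      congr 1; ext t; congr 2; abel
    rwa [hre] at hsb
  -- abbreviations
  set F : Rd d → ℝ → ℝ := fun w t => ‖fderiv ℝ u (z + t • (x - z) + w)‖ with hF
  set G : Rd d → ℝ := fun w => ∫ t in Set.Ioc (0:ℝ) 1, F w t with hG
  have hGint : IntegrableOn G (ball (0:Rd d) ρ) := hPI.integral_prod_left
  have hsum_int : IntegrableOn (fun w => u (x + w) - u (z + w)) (ball (0:Rd d) ρ) :=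
    (hui x hx).sub (hui z hz)
  have habs_int : IntegrableOn (fun w => |u (x + w) - u (z + w)|) (ball (0:Rd d) ρ) :=
    hsum_int.abs
  -- inner bound for fixed t
  have hA : ∀ t ∈ Set.Ioc (0:ℝ) 1, (∫ w in ball (0:Rd d) ρ, F w t) ≤ C * B1 * ρ ^ (β + d - 1) := by
    intro t ht
    have ht' : t ∈ Set.Icc (0:ℝ) 1 := Set.Ioc_subset_Icc_self ht
    have : (∫ w in ball (0:Rd d) ρ, F w t) = ∫ w in ball (z + t • (x - z)) ρ, ‖fderiv ℝ u w‖ :=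
      transl0 (z + t • (x - z)) ρ (fun w => ‖fderiv ℝ u w‖)
    rw [this]
    exact holder_ball hd hΩ hu hK hβ hint _ ρ hρ (hclsub t ht')
  have houter : (∫ t in Set.Ioc (0:ℝ) 1, ∫ w in ball (0:Rd d) ρ, F w t) ≤
      C * B1 * ρ ^ (β + d - 1) := by
    have h1 : (∫ t in Set.Ioc (0:ℝ) 1, ∫ w in ball (0:Rd d) ρ, F w t) ≤
        ∫ _t in Set.Ioc (0:ℝ) 1, C * B1 * ρ ^ (β + d - 1) := by
      refine setIntegral_mono_on hPI.integral_prod_right ?_ measurableSet_Ioc hA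
      exact integrableOn_const (by simp)
    refine h1.trans_eq ?_
    rw [setIntegral_const]
    simp [Real.volume_Ioc]
  calc |(ρ^d * B1)⁻¹ * (∫ w in ball x ρ, u w) - (ρ^d * B1)⁻¹ * (∫ w in ball z ρ, u w)|
      = (ρ^d * B1)⁻¹ * |∫ w in ball (0:Rd d) ρ, (u (x + w) - u (z + w))| := by
        rw [htx, htz, ← mul_sub, abs_mul, abs_of_pos (inv_pos.2 hVpos),
          integral_sub (hui x hx) (hui z hz)]
    _ ≤ (ρ^d * B1)⁻¹ * ∫ w in ball (0:Rd d) ρ, |u (x + w) - u (z + w)| := by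
        refine mul_le_mul_of_nonneg_left ?_ (inv_pos.2 hVpos).le
        have := norm_integral_le_integral_norm (μ := volume.restrict (ball (0:Rd d) ρ))
          (fun w => u (x + w) - u (z + w))
        simpa [Real.norm_eq_abs] using this
    _ ≤ (ρ^d * B1)⁻¹ * ∫ w in ball (0:Rd d) ρ, ‖x - z‖ * G w := by
        refine mul_le_mul_of_nonneg_left ?_ (inv_pos.2 hVpos).le
        refine setIntegral_mono_on habs_int (hGint.const_mul _) measurableSet_ball hpw
    _ = (ρ^d * B1)⁻¹ * (‖x - z‖ * ∫ t in Set.Ioc (0:ℝ) 1, ∫ w in ball (0:Rd d) ρ, F w t) := by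
        rw [integral_const_mul, integral_integral_swap hPI]
    _ ≤ (ρ^d * B1)⁻¹ * (‖x - z‖ * (C * B1 * ρ ^ (β + d - 1))) := by
        refine mul_le_mul_of_nonneg_left ?_ (inv_pos.2 hVpos).le
        exact mul_le_mul_of_nonneg_left houter (norm_nonneg _)
    _ = C * ‖x - z‖ * ρ ^ (β - 1) := by
        rw [show β + (d:ℝ) - 1 = (β - 1) + (d:ℕ) by push_cast; ring, Real.rpow_add hρ,
          Real.rpow_natCast]
        field_simp

theorem prod_integrable2 (hΩ : IsOpen Ω) (hu : ContDiffOn ℝ 1 u Ω)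
    (x : Rd d) (ρ : ℝ)
    (hin : ∀ t ∈ Set.Icc (0:ℝ) 1, ∀ w ∈ closedBall (0: Rd d) ρ, x + t • w ∈ Ω) :
    Integrable (Function.uncurry fun (w : Rd d) (t : ℝ) => ‖fderiv ℝ u (x + t • w)‖)
      ((volume.restrict (ball (0:Rd d) ρ)).prod (volume.restrict (Set.Ioc (0:ℝ) 1))) := by
  rw [Measure.prod_restrict]
  refine IntegrableOn.mono_set ?_
    (Set.prod_mono ball_subset_closedBall Set.Ioc_subset_Icc_self)
  refine ContinuousOn.integrableOn_compact
    ((isCompact_closedBall _ _).prod isCompact_Icc) ?_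
  have hφ : ContinuousOn (fun p : Rd d × ℝ => x + p.2 • p.1)
      (closedBall (0:Rd d) ρ ×ˢ Set.Icc (0:ℝ) 1) :=
    Continuous.continuousOn (by fun_prop)
  refine ((hu.continuousOn_fderiv_of_isOpen hΩ le_rfl).norm.comp hφ ?_)
  rintro ⟨w, t⟩ ⟨hw, ht⟩
  exact hin t ht w hw

theorem scale_ball (t ρ : ℝ) (ht : 0 < t) : t • (ball (0:Rd d) ρ) = ball (0:Rd d) (t*ρ) := by
  rw [smul_ball ht.ne' 0 ρ]
  simp [abs_of_pos ht]

theorem scaling (hd : 1 ≤ d) (t ρ : ℝ) (ht : 0 < t) (g : Rd d → ℝ) :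
    ∫ w in ball (0:Rd d) ρ, g (t • w) = (t ^ d)⁻¹ * ∫ w in ball (0:Rd d) (t * ρ), g w := by
  have h := MeasureTheory.Measure.setIntegral_comp_smul_of_pos (volume : Measure (Rd d)) g
    (ball (0:Rd d) ρ) ht
  rw [h, finrank_euclideanSpace_fin, smul_eq_mul, scale_ball t ρ ht]

theorem center_avg (hd : 1 ≤ d) (hΩ : IsOpen Ω) (hu : ContDiffOn ℝ 1 u Ω)
    (hK : 0 < K) (hβ : 0 < β)
    (hint : ∀ (y : Rd d) (r : ℝ), 0 < r → ball y r ⊆ Ω →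
      (∫ x in ball y r, ‖fderiv ℝ u x‖ ^ (d : ℝ)) ≤ K * r ^ (β * d))
    (y : Rd d) (r ρ : ℝ) (hr : 0 < r) (hρ : 0 < ρ) (hρr : ρ ≤ r)
    (hball : ball y (3*r/2) ⊆ Ω)
    (x : Rd d) (hx : x ∈ ball y (r/2)) :
    |u x - (ρ^d * (volume (ball (0 : Rd d) 1)).toReal)⁻¹ * (∫ w in ball x ρ, u w)|
      ≤ (K / (volume (ball (0 : Rd d) 1)).toReal) ^ (1/(d:ℝ)) * ρ ^ β / β := by
  set B1 := (volume (ball (0 : Rd d) 1)).toReal with hB1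
  have hB1pos : 0 < B1 :=
    ENNReal.toReal_pos (measure_ball_pos volume _ one_pos).ne' measure_ball_lt_top.ne
  have hVpos : 0 < ρ^d * B1 := by positivity
  set C := (K / B1) ^ (1/(d:ℝ)) with hC
  have hCpos : 0 < C := by rw [hC]; positivity
  have hxcl : ∀ s : ℝ, 0 < s → s ≤ ρ → closedBall x s ⊆ Ω := by
    intro s hs hsρ p hp
    apply hball
    rw [mem_ball]
    calc dist p y ≤ dist p x + dist x y := dist_triangle _ _ _
      _ < s + r/2 := add_lt_add_of_le_of_lt (mem_closedBall.1 hp) (mem_ball.1 hx)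
      _ ≤ 3*r/2 := by linarith
  have hin : ∀ t ∈ Set.Icc (0:ℝ) 1, ∀ w ∈ closedBall (0:Rd d) ρ, x + t • w ∈ Ω := by
    intro t ht w hw
    apply hball
    rw [mem_ball]
    have hnw : ‖w‖ ≤ ρ := mem_closedBall_zero_iff.1 hw
    calc dist (x + t • w) y ≤ dist (x + t • w) x + dist x y := dist_triangle _ _ _
      _ < ρ + r/2 := by
          refine add_lt_add_of_le_of_lt ?_ (mem_ball.1 hx)
          rw [dist_eq_norm]
          simp only [add_sub_cancel_left, norm_smul, Real.norm_eq_abs]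
          calc |t| * ‖w‖ ≤ 1 * ρ := by
                refine mul_le_mul ?_ hnw (norm_nonneg _) zero_le_one
                rw [abs_le]; constructor <;> linarith [ht.1, ht.2]
            _ = ρ := one_mul ρ
      _ ≤ 3*r/2 := by linarith
  have hPI := prod_integrable2 hΩ hu x ρ hin
  set F : Rd d → ℝ → ℝ := fun w t => ‖fderiv ℝ u (x + t • w)‖ with hF
  set G : Rd d → ℝ := fun w => ∫ t in Set.Ioc (0:ℝ) 1, F w t with hG
  have hGint : IntegrableOn G (ball (0:Rd d) ρ) := hPI.integral_prod_left
  have hGnn : ∀ w, 0 ≤ G w := fun w => integral_nonneg (fun t => norm_nonneg _)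
  have hui : IntegrableOn (fun w => u (x + w)) (ball (0:Rd d) ρ) := by
    refine IntegrableOn.mono_set ?_ (ball_subset_closedBall)
    refine ContinuousOn.integrableOn_compact (isCompact_closedBall _ _) ?_
    refine (hu.continuousOn.comp (Continuous.continuousOn (by fun_prop)) ?_)
    intro w hw
    have := hin 1 (by norm_num) w hw
    simpa using this
  have htransl : (∫ w in ball x ρ, u w) = ∫ w in ball (0:Rd d) ρ, u (x + w) := (transl0 x ρ u).symm
  have hVol : (volume (ball (0:Rd d) ρ)).toReal = ρ^d * B1 := by
    haveI : Nontrivial (Rd d) :=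
      Module.nontrivial_of_finrank_pos (R := ℝ) (by rw [finrank_euclideanSpace_fin]; omega)
    rw [Measure.addHaar_ball volume (0 : Rd d) hρ.le, finrank_euclideanSpace_fin,
      ENNReal.toReal_mul, ENNReal.toReal_ofReal (by positivity)]
  -- pointwise bound
  have hpw : ∀ w ∈ ball (0:Rd d) ρ, |u x - u (x + w)| ≤ ρ * G w := by
    intro w hw
    have hw' : w ∈ closedBall (0:Rd d) ρ := ball_subset_closedBall hw
    have hseg : ∀ t : ℝ, t ∈ Set.Icc (0:ℝ) 1 → x + t • ((x + w) - x) ∈ Ω := by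
      intro t ht
      rw [show (x + w) - x = w by abel]
      exact hin t ht w hw'
    have hsb := seg_bound hΩ hu x (x + w) hseg
    rw [show (x + w) - x = w by abel] at hsb
    rw [abs_sub_comm]
    refine hsb.trans ?_
    rw [intervalIntegral.integral_of_le zero_le_one]
    have : (∫ t in Set.Ioc (0:ℝ) 1, ‖fderiv ℝ u (x + t • w)‖) = G w := rfl
    rw [this]
    exact mul_le_mul_of_nonneg_right (le_of_lt (by simpa using mem_ball_zero_iff.1 hw)) (hGnn w)
  -- inner bound
  have hA : ∀ t ∈ Set.Ioc (0:ℝ) 1, (∫ w in ball (0:Rd d) ρ, F w t) ≤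
      C * B1 * ρ ^ (β + d - 1) * t ^ (β - 1) := by
    intro t ht
    have ht0 : 0 < t := ht.1
    have ht1 : t ≤ 1 := ht.2
    have hscale := scaling hd t ρ ht0 (fun v => ‖fderiv ℝ u (x + v)‖)
    have : (∫ w in ball (0:Rd d) ρ, F w t) =
        (t^d)⁻¹ * ∫ w in ball (0:Rd d) (t*ρ), ‖fderiv ℝ u (x + w)‖ := hscale
    rw [this, transl0 x (t*ρ) (fun v => ‖fderiv ℝ u v‖)]
    have htρ : 0 < t * ρ := mul_pos ht0 hρ
    have hhb := holder_ball hd hΩ hu hK hβ hint x (t*ρ) htρ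
      (hxcl (t*ρ) htρ (by nlinarith))
    calc (t^d)⁻¹ * ∫ w in ball x (t*ρ), ‖fderiv ℝ u w‖
        ≤ (t^d)⁻¹ * (C * B1 * (t*ρ) ^ (β + d - 1)) := by
          exact mul_le_mul_of_nonneg_left hhb (by positivity)
      _ = C * B1 * ρ ^ (β + d - 1) * t ^ (β - 1) := by
          rw [Real.mul_rpow ht0.le hρ.le, ← Real.rpow_natCast t d,
            show β + (d:ℝ) - 1 = (β - 1) + (d:ℕ) by push_cast; ring,
            Real.rpow_add ht0, Real.rpow_natCast]
          field_simp
  -- outer integral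
  have hrpowint : IntegrableOn (fun t : ℝ => C * B1 * ρ ^ (β + d - 1) * t ^ (β - 1))
      (Set.Ioc (0:ℝ) 1) := by
    have hbase : IntegrableOn (fun t : ℝ => t ^ (β - 1)) (Set.Ioc (0:ℝ) 1) := by
      rw [← intervalIntegrable_iff_integrableOn_Ioc_of_le zero_le_one]
      exact intervalIntegral.intervalIntegrable_rpow' (by linarith)
    exact hbase.const_mul _
  have hrpowval : (∫ t in Set.Ioc (0:ℝ) 1, t ^ (β - 1)) = 1/β := by
    rw [← intervalIntegral.integral_of_le zero_le_one,
      integral_rpow (Or.inl (by linarith))]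
    rw [Real.one_rpow, Real.zero_rpow (by linarith)]
    ring_nf
  have houter : (∫ t in Set.Ioc (0:ℝ) 1, ∫ w in ball (0:Rd d) ρ, F w t) ≤
      C * B1 * ρ ^ (β + d - 1) * (1/β) := by
    calc (∫ t in Set.Ioc (0:ℝ) 1, ∫ w in ball (0:Rd d) ρ, F w t)
        ≤ ∫ t in Set.Ioc (0:ℝ) 1, C * B1 * ρ ^ (β + d - 1) * t ^ (β - 1) := by
          exact setIntegral_mono_on hPI.integral_prod_right hrpowint measurableSet_Ioc hA
      _ = C * B1 * ρ ^ (β + d - 1) * (1/β) := by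
          rw [integral_const_mul, hrpowval]
  -- assemble
  calc |u x - (ρ^d * B1)⁻¹ * ∫ w in ball x ρ, u w|
      = (ρ^d * B1)⁻¹ * |∫ w in ball (0:Rd d) ρ, (u x - u (x + w))| := by
        rw [htransl, integral_sub (show Integrable (fun _ => u x) (volume.restrict (ball (0:Rd d) ρ)) from integrableOn_const measure_ball_lt_top.ne) hui,
          setIntegral_const, measureReal_def, smul_eq_mul, hVol]
        rw [show u x - (ρ^d*B1)⁻¹ * (∫ w in ball (0:Rd d) ρ, u (x+w)) =
          (ρ^d*B1)⁻¹ * (ρ^d*B1 * u x - ∫ w in ball (0:Rd d) ρ, u (x+w)) by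
            field_simp]
        rw [abs_mul, abs_of_pos (inv_pos.2 hVpos)]
    _ ≤ (ρ^d * B1)⁻¹ * ∫ w in ball (0:Rd d) ρ, |u x - u (x + w)| := by
        refine mul_le_mul_of_nonneg_left ?_ (inv_pos.2 hVpos).le
        have := norm_integral_le_integral_norm (μ := volume.restrict (ball (0:Rd d) ρ))
          (fun w => u x - u (x + w))
        simpa [Real.norm_eq_abs] using this
    _ ≤ (ρ^d * B1)⁻¹ * ∫ w in ball (0:Rd d) ρ, ρ * G w := by
        refine mul_le_mul_of_nonneg_left ?_ (inv_pos.2 hVpos).le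
        refine setIntegral_mono_on ?_ (hGint.const_mul _) measurableSet_ball hpw
        exact ((integrableOn_const measure_ball_lt_top.ne).sub hui).abs
    _ = (ρ^d * B1)⁻¹ * (ρ * ∫ t in Set.Ioc (0:ℝ) 1, ∫ w in ball (0:Rd d) ρ, F w t) := by
        rw [integral_const_mul, integral_integral_swap hPI]
    _ ≤ (ρ^d * B1)⁻¹ * (ρ * (C * B1 * ρ ^ (β + d - 1) * (1/β))) := by
        refine mul_le_mul_of_nonneg_left ?_ (inv_pos.2 hVpos).le
        exact mul_le_mul_of_nonneg_left houter hρ.le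
    _ = C * ρ ^ β / β := by
        rw [show β + (d:ℝ) - 1 = (β - 1) + (d:ℕ) by push_cast; ring, Real.rpow_add hρ,
          Real.rpow_natCast]
        have hρβ : ρ * ρ ^ (β-1) = ρ ^ β := by
          rw [show ρ * ρ^(β-1) = ρ^(1:ℝ) * ρ^(β-1) by rw [Real.rpow_one], ← Real.rpow_add hρ]
          ring_nf
        have hkey : (ρ^d * B1)⁻¹ * (ρ * (C * B1 * (ρ^(β-1) * ρ^d) * (1/β))) =
            C * (ρ * ρ^(β-1)) / β := by
          field_simp
        rw [hkey, hρβ]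

theorem nat_le_pow (d : ℕ) (hd : 1 ≤ d) : (d:ℝ) ≤ (29/20)^d := by
  induction d with
  | zero => norm_num
  | succ n ih =>
    rcases Nat.lt_or_ge n 3 with h3 | h3
    · interval_cases n <;> norm_num
    · have hn1 : 1 ≤ n := by omega
      have ihn := ih hn1
      have h1 : ((n:ℝ)+1) ≤ (29/20) * n := by
        have : (3:ℝ) ≤ n := by exact_mod_cast h3
        nlinarith
      calc ((n+1 : ℕ):ℝ) = (n:ℝ) + 1 := by push_cast; ring
        _ ≤ (29/20) * n := h1
        _ ≤ (29/20) * (29/20)^n := by nlinarith [ihn]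
        _ = (29/20)^(n+1) := by ring

theorem rpow_root_le (d : ℕ) (hd : 1 ≤ d) : ((d:ℝ)) ^ (1/(d:ℝ)) ≤ 29/20 := by
  have hD0 : (0:ℝ) < d := by exact_mod_cast hd
  have h := Real.rpow_le_rpow (by positivity) (nat_le_pow d hd) (by positivity : (0:ℝ) ≤ 1/(d:ℝ))
  calc ((d:ℝ)) ^ (1/(d:ℝ)) ≤ ((29/20:ℝ)^d) ^ (1/(d:ℝ)) := h
    _ = 29/20 := by
        rw [← Real.rpow_natCast (29/20 : ℝ) d, ← Real.rpow_mul (by norm_num),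
          mul_one_div, div_self hD0.ne', Real.rpow_one]

theorem grad_zero (hd : 1 ≤ d) (hΩ : IsOpen Ω) (hu : ContDiffOn ℝ 1 u Ω)
    (hK : 0 < K) (hβ : 0 < β) (hβ1 : 1 < β)
    (hint : ∀ (y : Rd d) (r : ℝ), 0 < r → ball y r ⊆ Ω →
      (∫ x in ball y r, ‖fderiv ℝ u x‖ ^ (d : ℝ)) ≤ K * r ^ (β * d)) :
    ∀ x ∈ Ω, fderiv ℝ u x = 0 := by
  intro x hx
  by_contra hne
  set B1 := (volume (ball (0 : Rd d) 1)).toReal with hB1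
  have hB1pos : 0 < B1 :=
    ENNReal.toReal_pos (measure_ball_pos volume _ one_pos).ne' measure_ball_lt_top.ne
  set c := ‖fderiv ℝ u x‖ with hc
  have hcpos : 0 < c := norm_pos_iff.2 hne
  have hca : ContinuousAt (fderiv ℝ u) x :=
    ((hu.continuousOn_fderiv_of_isOpen hΩ le_rfl) x hx).continuousAt (hΩ.mem_nhds hx)
  obtain ⟨δ1, hδ1pos, hδ1⟩ := Metric.continuousAt_iff.1 hca (c/2) (by positivity)
  obtain ⟨δ2, hδ2pos, hδ2⟩ := Metric.isOpen_iff.1 hΩ x hx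
  set δ := min (δ1/2) (δ2/2) with hδ
  have hδpos : 0 < δ := lt_min (by positivity) (by positivity)
  have hlow : ∀ z ∈ ball x δ, c/2 ≤ ‖fderiv ℝ u z‖ := by
    intro z hz
    have hzd : dist z x < δ1 := by
      have := mem_ball.1 hz
      calc dist z x < δ := this
        _ ≤ δ1/2 := min_le_left _ _
        _ < δ1 := by linarith
    have h1 := hδ1 hzd
    rw [dist_eq_norm] at h1
    have h2 := norm_sub_norm_le (fderiv ℝ u x) (fderiv ℝ u z)
    rw [norm_sub_rev] at h1
    linarith [h2.trans h1.le]
  have hballΩ : ∀ s : ℝ, 0 < s → s ≤ δ → closedBall x s ⊆ Ω := by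
    intro s hs hsδ p hp
    apply hδ2
    rw [mem_ball]
    calc dist p x ≤ s := mem_closedBall.1 hp
      _ ≤ δ := hsδ
      _ ≤ δ2/2 := min_le_right _ _
      _ < δ2 := by linarith
  have hVol : ∀ s : ℝ, 0 ≤ s → (volume (ball x s)).toReal = s^d * B1 := by
    intro s hs
    haveI : Nontrivial (Rd d) :=
      Module.nontrivial_of_finrank_pos (R := ℝ) (by rw [finrank_euclideanSpace_fin]; omega)
    rw [Measure.addHaar_ball volume x hs, finrank_euclideanSpace_fin, ENNReal.toReal_mul,
      ENNReal.toReal_ofReal (by positivity)]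
  have hbound : ∀ s : ℝ, 0 < s → s ≤ δ → (c/2)^((d:ℕ):ℝ) * (s^d * B1) ≤ K * s^(β*d) := by
    intro s hs hsδ
    have h1 := hint x s hs ((ball_subset_closedBall).trans (hballΩ s hs hsδ))
    have hInt : IntegrableOn (fun z => ‖fderiv ℝ u z‖ ^ ((d:ℕ):ℝ)) (ball x s) := by
      refine IntegrableOn.mono_set ?_ ball_subset_closedBall
      refine ContinuousOn.integrableOn_compact (isCompact_closedBall _ _) ?_
      refine ContinuousOn.rpow_const ?_ (fun z _ => Or.inr (by positivity))
      exact ((hu.continuousOn_fderiv_of_isOpen hΩ le_rfl).mono (hballΩ s hs hsδ)).norm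
    have h2 : (c/2)^((d:ℕ):ℝ) * (s^d * B1) ≤ ∫ z in ball x s, ‖fderiv ℝ u z‖^((d:ℕ):ℝ) := by
      have he : (∫ _z in ball x s, (c/2)^((d:ℕ):ℝ)) = (c/2)^((d:ℕ):ℝ) * (s^d*B1) := by
        rw [setIntegral_const, measureReal_def, smul_eq_mul, hVol s hs.le, mul_comm]
      rw [← he]
      refine setIntegral_mono_on (integrableOn_const measure_ball_lt_top.ne) hInt
        measurableSet_ball ?_
      intro z hz
      have hzδ : z ∈ ball x δ := lt_of_lt_of_le (mem_ball.1 hz) hsδ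
      exact Real.rpow_le_rpow (by positivity) (hlow z hzδ) (by positivity)
    exact h2.trans h1
  -- choose small s
  set a := β * d - d with ha
  have hDpos : (0:ℝ) < d := by exact_mod_cast hd
  have hapos : 0 < a := by rw [ha]; nlinarith
  set ε := (c/2)^((d:ℕ):ℝ) * B1 / K with hε
  have hεpos : 0 < ε := by
    rw [hε]
    have : (0:ℝ) < (c/2)^((d:ℕ):ℝ) := Real.rpow_pos_of_pos (by positivity) _
    positivity
  set s := min δ (ε ^ (1/a) / 2) with hs
  have hspos : 0 < s := lt_min hδpos (by positivity)
  have hsδ : s ≤ δ := min_le_left _ _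
  have hkey := hbound s hspos hsδ
  have hsa : s ^ a < ε := by
    have h1 : s ≤ ε ^ (1/a) / 2 := min_le_right _ _
    have h2 : s ^ a ≤ (ε ^ (1/a) / 2) ^ a := Real.rpow_le_rpow hspos.le h1 hapos.le
    have h3 : (ε ^ (1/a) / 2) ^ a = ε / 2 ^ a := by
      rw [Real.div_rpow (by positivity) (by norm_num), ← Real.rpow_mul hεpos.le,
        one_div_mul_cancel hapos.ne', Real.rpow_one]
    have h4 : ε / 2 ^ a < ε := by
      have : (1:ℝ) < 2 ^ a := Real.one_lt_rpow_iff_of_pos (by norm_num) |>.2 (Or.inl ⟨by norm_num, hapos⟩)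
      rw [div_lt_iff₀ (by positivity)]
      nlinarith
    calc s ^ a ≤ ε / 2^a := h2.trans_eq h3
      _ < ε := h4
  have hsplit : s ^ (β*d) = s ^ ((d:ℕ):ℝ) * s ^ a := by
    rw [← Real.rpow_add hspos, ha]
    norm_num
  have hsd : s ^ ((d:ℕ):ℝ) = s ^ (d:ℕ) := Real.rpow_natCast s d
  have : K * s ^ (β*d) < (c/2)^((d:ℕ):ℝ) * (s^d * B1) := by
    rw [hsplit, hsd]
    calc K * (s ^ (d:ℕ) * s ^ a) < K * (s ^ (d:ℕ) * ε) := by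
          have hsdpos : (0:ℝ) < s ^ (d:ℕ) := pow_pos hspos d
          have := mul_lt_mul_of_pos_left hsa hsdpos
          exact mul_lt_mul_of_pos_left (by nlinarith) hK
      _ = (c/2)^((d:ℕ):ℝ) * (s^(d:ℕ) * B1) := by
          rw [hε]
          field_simp
  linarith

end Helpers

set_option maxHeartbeats 2000000 in
/-- Morrey-type lemma: a Campanato-type bound on ∫_B |∇u|^d gives Hölder
continuity with explicit constants. -/
theorem stmt16 (d : ℕ) (hd : 1 ≤ d) (Ω : Set (Rd d)) (hΩ : IsOpen Ω)
    (u : Rd d → ℝ) (hu : ContDiffOn ℝ 1 u Ω)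
    (K β : ℝ) (hK : 0 < K) (hβ : 0 < β)
    (hint : ∀ (y : Rd d) (r : ℝ), 0 < r → ball y r ⊆ Ω →
      (∫ x in ball y r, ‖fderiv ℝ u x‖ ^ (d : ℝ)) ≤ K * r ^ (β * d)) :
    ∀ (y : Rd d) (r : ℝ), 0 < r → ball y (3 * r / 2) ⊆ Ω →
      sSup (u '' ball y (r / 2)) - sInf (u '' ball y (r / 2)) ≤
        (4 / β) * (K / omegaD d) ^ (1 / (d : ℝ)) * r ^ β := by
  intro y r hr hball
  set B1 := (volume (ball (0 : Rd d) 1)).toReal with hB1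
  have hB1pos : 0 < B1 :=
    ENNReal.toReal_pos (measure_ball_pos volume _ one_pos).ne' measure_ball_lt_top.ne
  have hDpos : (0:ℝ) < d := by exact_mod_cast hd
  have hω : omegaD d = d * B1 := rfl
  have hωpos : 0 < omegaD d := by rw [hω]; positivity
  set M := (K / omegaD d) ^ (1 / (d:ℝ)) with hM
  have hMnn : 0 ≤ M := Real.rpow_nonneg (div_nonneg hK.le hωpos.le) _
  have hCeq : (K/B1)^(1/(d:ℝ)) = (d:ℝ)^(1/(d:ℝ)) * M := by
    rw [hM, hω, ← Real.mul_rpow (by positivity) (div_nonneg hK.le (by positivity))]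
    congr 1
    field_simp
  have hd145 := rpow_root_le d hd
  have hdnn : 0 ≤ ((d:ℝ))^(1/(d:ℝ)) := Real.rpow_nonneg hDpos.le _
  have hrβpos : 0 < r ^ β := Real.rpow_pos_of_pos hr β
  have hRHSnn : 0 ≤ (4/β) * M * r ^ β := by positivity
  have hballin : ball y (r/2) ⊆ Ω := fun p hp => hball (by
    rw [mem_ball] at hp ⊢; linarith)
  have hpair : ∀ x ∈ ball y (r/2), ∀ z ∈ ball y (r/2),
      u x - u z ≤ (4/β) * M * r ^ β := by
    rcases le_or_gt β 1 with hβ1 | hβ1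
    · intro x hx z hz
      have hxz : ‖x - z‖ ≤ r := by
        rw [← dist_eq_norm]
        have h1 := mem_ball.1 hx
        have h2 := mem_ball.1 hz
        calc dist x z ≤ dist x y + dist y z := dist_triangle x y z
          _ ≤ r := by rw [dist_comm y z]; linarith
      set C := (K/B1)^(1/(d:ℝ)) with hC
      have hCpos : 0 < C := by rw [hC]; positivity
      have htri : ∀ ρ : ℝ, 0 < ρ → ρ ≤ r →
          u x - u z ≤ 2*(C * ρ^β/β) + C * r * ρ^(β-1) := by
        intro ρ hρpos hρr
        have h1 := center_avg hd hΩ hu hK hβ hint y r ρ hr hρpos hρr hball x hx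
        have h2 := center_avg hd hΩ hu hK hβ hint y r ρ hr hρpos hρr hball z hz
        have h3 := avg_diff hd hΩ hu hK hβ hint y r ρ hr hρpos hρr hball x z hx hz
        rw [← hB1] at h1 h2 h3
        rw [← hC] at h1 h2 h3
        have h3' : |(ρ^d * B1)⁻¹ * (∫ w in ball x ρ, u w) -
            (ρ^d * B1)⁻¹ * (∫ w in ball z ρ, u w)| ≤ C * r * ρ^(β-1) := by
          refine h3.trans ?_
          have hρb : 0 ≤ ρ^(β-1) := Real.rpow_nonneg hρpos.le _
          exact mul_le_mul_of_nonneg_right (mul_le_mul_of_nonneg_left hxz hCpos.le) hρb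
        set Ax := (ρ^d * B1)⁻¹ * ∫ w in ball x ρ, u w
        set Az := (ρ^d * B1)⁻¹ * ∫ w in ball z ρ, u w
        have e1 := abs_le.1 h1
        have e2 := abs_le.1 h2
        have e3 := abs_le.1 h3'
        have : u x - u z = (u x - Ax) + (Ax - Az) - (u z - Az) := by ring
        rw [this]
        linarith [e1.1, e1.2, e2.1, e2.2, e3.1, e3.2]
      rcases le_or_gt β (1/2) with hβhalf | hβhalf
      · -- ρ = r
        have hb := htri r hr le_rfl
        have hrr : r * r^(β-1) = r^β := by
          rw [show r * r^(β-1) = r^(1:ℝ) * r^(β-1) by rw [Real.rpow_one],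
            ← Real.rpow_add hr]
          ring_nf
        have hb2 : u x - u z ≤ C * r^β * (2/β + 1) := by
          refine hb.trans_eq ?_
          rw [mul_comm (C * r) (r^(β-1))]
          rw [show C * r^β * (2/β + 1) = 2*(C*r^β/β) + C * (r * r^(β-1)) by
            rw [hrr]; field_simp]
          ring
        refine hb2.trans ?_
        rw [hCeq]
        have hfact : ((d:ℝ))^(1/(d:ℝ)) * (2/β + 1) ≤ 4/β := by
          have h25 : 2/β + 1 ≤ 5/(2*β) := by
            rw [div_add' _ _ _ hβ.ne', div_le_div_iff₀ hβ (by positivity)]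
            nlinarith
          have h25nn : (0:ℝ) ≤ 2/β + 1 := by positivity
          calc ((d:ℝ))^(1/(d:ℝ)) * (2/β + 1) ≤ (29/20) * (5/(2*β)) :=
                mul_le_mul hd145 h25 h25nn (by norm_num)
            _ = (29/8)/β := by field_simp; ring
            _ ≤ 4/β := by
                rw [div_le_div_iff₀ (by positivity) hβ]
                nlinarith
        calc ((d:ℝ))^(1/(d:ℝ)) * M * r^β * (2/β + 1)
            = (((d:ℝ))^(1/(d:ℝ)) * (2/β + 1)) * (M * r^β) := by ring
          _ ≤ (4/β) * (M * r^β) := by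
              refine mul_le_mul_of_nonneg_right hfact (by positivity)
          _ = 4/β * M * r^β := by ring
      · -- ρ = r/2
        have hb := htri (r/2) (by linarith) (by linarith)
        have hL2 : (0.6931471803 : ℝ) < Real.log 2 := Real.log_two_gt_d9
        have h2β : β * Real.log 2 + 1 ≤ (2:ℝ)^β := by
          rw [Real.rpow_def_of_pos (by norm_num : (0:ℝ) < 2), mul_comm (Real.log 2) β]
          exact Real.add_one_le_exp _
        have h2βpos : (0:ℝ) < (2:ℝ)^β := Real.rpow_pos_of_pos (by norm_num) _
        have hhalfβ : (r/2)^β = r^β / 2^β := Real.div_rpow hr.le (by norm_num) β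
        have hhalfβ1 : (r/2)^(β-1) = r^β / r * (2 / 2^β) := by
          rw [Real.div_rpow hr.le (by norm_num : (0:ℝ) ≤ 2)]
          rw [show β - 1 = β + (-1) by ring, Real.rpow_add hr,
            Real.rpow_add (by norm_num : (0:ℝ) < 2), Real.rpow_neg_one, Real.rpow_neg_one]
          field_simp
        have hb2 : u x - u z ≤ C * r^β * (2/2^β) * (1/β + 1) := by
          refine hb.trans_eq ?_
          rw [hhalfβ, hhalfβ1]
          field_simp
        refine hb2.trans ?_
        rw [hCeq]
        have hfact : ((d:ℝ))^(1/(d:ℝ)) * (2/2^β) * (1/β + 1) ≤ 4/β := by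
          have e1 : ((d:ℝ))^(1/(d:ℝ)) * (2/2^β) * (1/β + 1) =
              ((d:ℝ))^(1/(d:ℝ)) * 2 * (1+β) / (2^β * β) := by
            field_simp
          rw [e1, div_le_div_iff₀ (by positivity) hβ]
          nlinarith [hd145, h2β, hL2, hβ, hβ1, hβhalf, h2βpos, hdnn,
            mul_pos hβ h2βpos, sq_nonneg β]
        calc ((d:ℝ))^(1/(d:ℝ)) * M * r^β * (2/2^β) * (1/β + 1)
            = (((d:ℝ))^(1/(d:ℝ)) * (2/2^β) * (1/β + 1)) * (M * r^β) := by ring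
          _ ≤ (4/β) * (M * r^β) := mul_le_mul_of_nonneg_right hfact (by positivity)
          _ = 4/β * M * r^β := by ring
    · -- β > 1 : u is constant
      have hz0 := grad_zero hd hΩ hu hK hβ hβ1 hint
      intro x hx z hz
      have hseg : ∀ t : ℝ, t ∈ Set.Icc (0:ℝ) 1 → z + t • (x - z) ∈ Ω := by
        intro t ht
        exact hballin ((convex_ball y (r/2)).add_smul_sub_mem hz hx ht)
      have hftc := ftc_seg hΩ hu z x hseg
      have hzero : u x - u z = 0 := by
        rw [hftc]
        have hcongr : Set.EqOn (fun t : ℝ => (fderiv ℝ u (z + t • (x - z))) (x - z))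
            (fun _ => (0:ℝ)) (Set.uIcc 0 1) := by
          intro t ht
          rw [Set.uIcc_of_le (by norm_num : (0:ℝ) ≤ 1)] at ht
          simp [hz0 _ (hseg t ht)]
        rw [intervalIntegral.integral_congr hcongr]
        simp
      linarith
  -- conclude
  have hsub2 : closedBall y (r/2) ⊆ Ω := fun p hp => hball (by
    rw [mem_closedBall] at hp; rw [mem_ball]; linarith)
  have hucont : ContinuousOn u (closedBall y (r/2)) := hu.continuousOn.mono hsub2
  have hK2 : IsCompact (u '' closedBall y (r/2)) :=
    (isCompact_closedBall y (r/2)).image_of_continuousOn hucont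
  have himg : u '' ball y (r/2) ⊆ u '' closedBall y (r/2) :=
    Set.image_mono ball_subset_closedBall
  have hbddA : BddAbove (u '' ball y (r/2)) := hK2.bddAbove.mono himg
  have hbddB : BddBelow (u '' ball y (r/2)) := hK2.bddBelow.mono himg
  have hne : (u '' ball y (r/2)).Nonempty := by
    refine ⟨u y, y, ?_, rfl⟩
    exact mem_ball_self (by linarith)
  rw [sub_le_iff_le_add]
  refine csSup_le hne ?_
  rintro a ⟨xa, hxa, rfl⟩
  rw [← sub_le_iff_le_add']
  refine le_csInf hne ?_
  rintro b ⟨xb, hxb, rfl⟩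
  have := hpair xa hxa xb hxb
  linarith
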